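/- arXiv:1906.07179 — 3 statements merged into one kernel-verified Lean document; each statement's English description precedes it below -/
import Mathlib

section
/- Let $R$ be a ring, and let $B_1, B_2, B_2', B_2'' \in M_n(R)$ satisfy $B_2 = B_2' + B_2''$, $(B_2')^2 = 0$, $B_2'' B_2' = 0$, and $B_2 B_1 = 0$, and suppose $I - B_1$, $I - B_2''$ are invertible. Then $I - B_1 - B_2$ is invertible and $(I - B_1 - B_2)^{-1} = (I-B_1)^{-1}(I + B_2')(I - B_2'')^{-1}$. -/
/-!
Since `B₂ B₁ = 0` and `B₂'' B₂' = 0`, the matrix factors as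
`I - B₁ - B₂ = (I - B₂'') (I - B₂') (I - B₁)`, and `I - B₂'` is a unit with inverse `I + B₂'`
because `B₂'` squares to zero. Inverting the product reverses the factors.
-/

section

variable {R : Type*} [Ring R]

theorem isUnit_one_sub_and_inverse_eq_one_add_of_mul_self_eq_zero {a : R} (h : a * a = 0) :
    IsUnit (1 - a) ∧ Ring.inverse (1 - a) = 1 + a := by
  let u : Rˣ :=
    { val := 1 - a
      inv := 1 + a
      val_inv := by rw [one_sub_mul, mul_one_add, h]; abel
      inv_val := by rw [mul_one_sub, one_add_mul, h]; abel }
  exact ⟨u.isUnit, Ring.inverse_unit u⟩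

theorem one_sub_sub_add_eq_mul_mul {a b c : R} (hcb : c * b = 0) (hbca : (b + c) * a = 0) :
    1 - a - (b + c) = (1 - c) * (1 - b) * (1 - a) := by
  have hfirst : (1 - c) * (1 - b) = 1 - (b + c) := by
    rw [mul_one_sub, one_sub_mul, hcb]; abel
  rw [hfirst, mul_one_sub, one_sub_mul, hbca]
  abel

end

/-- If `B₂ = B₂' + B₂''`, `(B₂')² = 0`, `B₂'' B₂' = 0`, `B₂ B₁ = 0`, and
`I - B₁`, `I - B₂''` are invertible, then `I - B₁ - B₂` is invertible with inverse
`(I - B₁)⁻¹ (I + B₂') (I - B₂'')⁻¹`. -/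
theorem stmt7 {R : Type*} [Ring R] {n : ℕ}
    (B₁ B₂ B₂' B₂'' : Matrix (Fin n) (Fin n) R)
    (hsum : B₂ = B₂' + B₂'') (hsq : B₂' ^ 2 = 0) (h21 : B₂'' * B₂' = 0)
    (h0 : B₂ * B₁ = 0) (h1 : IsUnit (1 - B₁)) (h2 : IsUnit (1 - B₂'')) :
    IsUnit (1 - B₁ - B₂) ∧
      Ring.inverse (1 - B₁ - B₂) =
        Ring.inverse (1 - B₁) * (1 + B₂') * Ring.inverse (1 - B₂'') := by
  subst hsum
  obtain ⟨hunit₂', hinv₂'⟩ :=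
    isUnit_one_sub_and_inverse_eq_one_add_of_mul_self_eq_zero (pow_two B₂' ▸ hsq)
  rw [one_sub_sub_add_eq_mul_mul h21 h0]
  refine ⟨(h2.mul hunit₂').mul h1, ?_⟩
  rw [Ring.inverse_mul (Or.inr h1), Ring.inverse_mul (Or.inl h2), hinv₂', mul_assoc]
end

section
/- Let $(I,\le)$ be a finite poset that is a tree, and let $\mathbf{K} = \{K_i\}_{i \in I}$ be a poset of fields over $I$, i.e., a family of fields with $K_i \subseteq K_j$ whenever $j \le i$. Then there exists a field $K$ and a family of field embeddings $\varphi_i \colon K_i \to K$ such that $\varphi_i|_{K_j} = \varphi_j$ whenever $i \le j$. -/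
/-!
Grow the embeddings down the tree, one leaf at a time. Suppose compatible embeddings into a
field `K` exist on an upper set `s`, and let `m` be a maximal element outside `s`. In a tree the
elements above `m` form a chain, whose least element `p` is the parent of `m`, and every relation
between `m` and `s` factors through `p`. So it suffices to amalgamate `K_m` and `K` over their
common subfield `K_p`: since `K_p` is a field, `K_m ⊗[K_p] K` is nonzero, and its quotient by a
maximal ideal is a field receiving both.
-/

universe u

open TensorProduct in
theorem exists_field_ringHom_comp_eq_comp {A B C : Type u} [Field A] [Field B] [Field C]
    (f : A →+* B) (g : A →+* C) :
    ∃ (D : Type u) (_ : Field D) (fB : B →+* D) (fC : C →+* D), fB.comp f = fC.comp g := by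
  let := f.toAlgebra
  let := g.toAlgebra
  obtain ⟨M, hM⟩ := Ideal.exists_maximal (B ⊗[A] C)
  let q := Ideal.Quotient.mkₐ A M
  let fB : B →ₐ[A] B ⊗[A] C ⧸ M := q.comp Algebra.TensorProduct.includeLeft
  let fC : C →ₐ[A] B ⊗[A] C ⧸ M := q.comp Algebra.TensorProduct.includeRight
  exact ⟨_, Ideal.Quotient.field M, fB, fC,
    fB.comp_algebraMap.trans fC.comp_algebraMap.symm⟩

theorem Set.Finite.exists_isLeast_of_isChain {α : Type*} [Preorder α] {s : Set α}
    (hs : s.Finite) (hne : s.Nonempty) (hchain : IsChain (· ≤ ·) s) : ∃ a, IsLeast s a := by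
  obtain ⟨a, ha⟩ := hs.exists_minimal hne
  exact ⟨a, ha.1, fun b hb => (hchain.total ha.1 hb).elim id (ha.2 hb)⟩

section PosetOfFields

variable {I : Type} [PartialOrder I] {F : I → Type} [∀ i, Field (F i)]
  (ι : ∀ i j : I, i ≤ j → (F j →+* F i))

def HasCompatibleEmbeddingsOn (s : Finset I) : Prop :=
  ∃ (K : Type) (_ : Field K) (φ : ∀ i : s, F i →+* K),
    ∀ (i j : s) (h : (i : I) ≤ j), (φ i).comp (ι i j h) = φ j

variable {ι}
variable (htrans : ∀ (i j k : I) (hij : i ≤ j) (hjk : j ≤ k),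
  (ι i j hij).comp (ι j k hjk) = ι i k (hij.trans hjk))
include htrans

theorem hasCompatibleEmbeddingsOn_singleton (i0 : I) : HasCompatibleEmbeddingsOn ι {i0} :=
  ⟨F i0, inferInstance, fun i => ι i0 i (Finset.mem_singleton.1 i.2).ge,
    fun _ _ _ => htrans _ _ _ _ _⟩

theorem hasCompatibleEmbeddingsOn_insert [DecidableEq I] {s : Finset I} {m p : I}
    (hs : HasCompatibleEmbeddingsOn ι s) (hm : ∀ j ∈ s, ¬ j ≤ m) (hp : p ∈ s)
    (hparent : IsLeast (Set.Ioi m) p) : HasCompatibleEmbeddingsOn ι (insert m s) := by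
  obtain ⟨K, _, φ, hφ⟩ := hs
  obtain ⟨D, _, ψ, e, hψe⟩ := exists_field_ringHom_comp_eq_comp (ι m p hparent.1.le) (φ ⟨p, hp⟩)
  have hmem (i : (insert m s : Finset I)) (hi : (i : I) ≠ m) : (i : I) ∈ s :=
    (Finset.mem_insert.1 i.2).resolve_left hi
  refine ⟨D, inferInstance, fun i => if hi : (i : I) = m then ψ.comp (ι m i hi.ge)
    else e.comp (φ ⟨i, hmem i hi⟩), ?_⟩
  rintro ⟨i, hi⟩ ⟨j, hj⟩ (hij : i ≤ j)
  by_cases him : i = m <;> by_cases hjm : j = m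
  · subst him hjm
    simp only [dif_pos, RingHom.comp_assoc, htrans]
  · subst him
    -- `ι i j` factors through the parent `p`, where `ψ` and `e ∘ φ` agree
    have hpj : p ≤ j := hparent.2 (lt_of_le_of_ne hij (Ne.symm hjm))
    simp only [dif_pos, dif_neg hjm, RingHom.comp_assoc, htrans]
    rw [← htrans i p j hparent.1.le hpj, ← RingHom.comp_assoc, hψe, RingHom.comp_assoc,
      hφ ⟨p, hp⟩ ⟨j, hmem ⟨j, hj⟩ hjm⟩ hpj]
  · exact absurd (hjm ▸ hij) (hm i (hmem ⟨i, hi⟩ him))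
  · simp only [dif_neg him, dif_neg hjm, RingHom.comp_assoc]
    rw [hφ ⟨i, _⟩ ⟨j, _⟩ hij]

theorem hasCompatibleEmbeddingsOn_of_isUpperSet {i0 : I} (hmax : ∀ i, i ≤ i0)
    (hparent : ∀ m, m ≠ i0 → ∃ p, IsLeast (Set.Ioi m) p) (s : Finset I)
    (hs : IsUpperSet (s : Set I)) (hi0 : i0 ∈ s) : HasCompatibleEmbeddingsOn ι s := by
  classical
  induction s using Finset.strongInduction with
  | H s ih =>
    obtain rfl | hne := eq_or_ne s {i0}
    · exact hasCompatibleEmbeddingsOn_singleton htrans i0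
    obtain ⟨m, hm⟩ := Finset.exists_minimal ⟨i0, hi0⟩
    have hm0 : m ≠ i0 := by
      rintro rfl
      refine hne (Finset.eq_singleton_iff_unique_mem.2 ⟨hi0, fun j hj => ?_⟩)
      exact le_antisymm (hmax j) (hm.2 hj (hmax j))
    obtain ⟨p, hp⟩ := hparent m hm0
    have hbelow : ∀ j ∈ s.erase m, ¬ j ≤ m := fun j hj hjm =>
      (Finset.mem_erase.1 hj).1 (le_antisymm hjm (hm.2 (Finset.mem_erase.1 hj).2 hjm))
    have hupper : IsUpperSet (s.erase m : Set I) := fun x y hxy hx =>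
      Finset.mem_erase.2 ⟨fun hym => hbelow x hx (hym ▸ hxy), hs hxy (Finset.mem_erase.1 hx).2⟩
    rw [← Finset.insert_erase hm.1]
    exact hasCompatibleEmbeddingsOn_insert htrans
      (ih _ (Finset.erase_ssubset hm.1) hupper (Finset.mem_erase.2 ⟨hm0.symm, hi0⟩)) hbelow
      (Finset.mem_erase.2 ⟨hp.1.ne', hs hp.1.le hm.1⟩) hp

end PosetOfFields

theorem stmt9_general {I : Type} [PartialOrder I] [Fintype I] (i0 : I) (hmax : ∀ i : I, i ≤ i0)
    (htree : ∀ i : I, IsChain (· ≤ ·) {j : I | i ≤ j ∧ j ≤ i0})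
    (F : I → Type) [∀ i, Field (F i)]
    (ι : ∀ i j : I, i ≤ j → (F j →+* F i))
    (htrans : ∀ (i j k : I) (hij : i ≤ j) (hjk : j ≤ k),
      (ι i j hij).comp (ι j k hjk) = ι i k (hij.trans hjk)) :
    ∃ (K : Type) (_ : Field K) (φ : ∀ i : I, F i →+* K),
      ∀ (i j : I) (h : i ≤ j), (φ i).comp (ι i j h) = φ j := by
  have hparent (m : I) (hm : m ≠ i0) : ∃ p, IsLeast (Set.Ioi m) p :=
    (Set.toFinite (Set.Ioi m)).exists_isLeast_of_isChain ⟨i0, lt_of_le_of_ne (hmax m) hm⟩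
      ((htree m).mono fun j (hj : m < j) => show m ≤ j ∧ j ≤ i0 from ⟨hj.le, hmax j⟩)
  obtain ⟨K, _, φ, hφ⟩ := hasCompatibleEmbeddingsOn_of_isUpperSet htrans hmax hparent
    Finset.univ (by simpa using isUpperSet_univ) (Finset.mem_univ i0)
  exact ⟨K, inferInstance, fun i => φ ⟨i, Finset.mem_univ i⟩, fun i j h =>
    hφ ⟨i, Finset.mem_univ i⟩ ⟨j, Finset.mem_univ j⟩ h⟩

/-- A poset of fields over a finite tree poset embeds into a constant
system: there is a field `K` and compatible embeddings `φᵢ : Kᵢ → K`.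
Here `ι i j h : F j →+* F i` (for `h : i ≤ j`) records that `K_j ⊆ K_i` when `i ≤ j`. -/
theorem stmt9 {I : Type} [PartialOrder I] [Fintype I] (i0 : I) (hmax : ∀ i : I, i ≤ i0)
    (htree : ∀ i : I, IsChain (· ≤ ·) {j : I | i ≤ j ∧ j ≤ i0})
    (F : I → Type) [∀ i, Field (F i)]
    (ι : ∀ i j : I, i ≤ j → (F j →+* F i))
    (hrefl : ∀ i : I, ι i i le_rfl = RingHom.id (F i))
    (htrans : ∀ (i j k : I) (hij : i ≤ j) (hjk : j ≤ k),
      (ι i j hij).comp (ι j k hjk) = ι i k (hij.trans hjk)) :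
    ∃ (K : Type) (_ : Field K) (φ : ∀ i : I, F i →+* K),
      ∀ (i j : I) (h : i ≤ j), (φ i).comp (ι i j h) = φ j :=
  stmt9_general i0 hmax htree F ι htrans
end

section
/- Let $E$ be a finite directed graph, $H \subseteq E^0$ a hereditary subset, $e \in E^1$ an edge with $s(e) \notin H$ and $r(e) \in H$, and $K$ a field. Suppose $b_1, \dots, b_m$ are elements of the power series algebra $P_K((E))$ supported on paths starting at $r(e)$, which are $K$-linearly independent, and $a_1, \dots, a_m \in P_K((E))$ are supported on paths entirely inside $E^0 \setminus H$. If $a_i e \ne 0$ for some $i$, then $\sum_{i=1}^m a_i e b_i \ne 0$ in $P_K((E))$. -/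
/-
Put `cᵢ = aᵢ e`. Since `aᵢ` lives on paths inside `E⁰ \ H` and `r(e) ∈ H`, every `cᵢ` is
supported on exit paths: paths that stay in `E⁰ \ H` up to a last edge entering `H`. Choose an
exit path `μ` ending at `r(e)` with `c_{i₀}(μ) ≠ 0`. For every path `ν` from `r(e)`, the only
exit-path prefix of `μν` is `μ`, so the coefficient of `μν` in `∑ cᵢ bᵢ` is `∑ cᵢ(μ) bᵢ(ν)`. As the
`bᵢ` live on paths starting at `r(e)`, the vanishing of `∑ cᵢ bᵢ` gives `∑ cᵢ(μ) bᵢ = 0`, and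
linear independence forces `c_{i₀}(μ) = 0`.
-/

/-- Coefficient functions of formal power series on the paths of a quiver. -/
abbrev SeriesCoef (V : Type) [Quiver.{1} V] (K : Type) := ∀ u w : V, Quiver.Path u w → K

/-- Auxiliary convolution: `conv a b γ = ∑_{γ = μ·ν} a μ * b ν`. -/
def conv {V K : Type} [Quiver.{1} V] [Semiring K] (a : SeriesCoef V K) :
    ∀ {u w : V}, (∀ p : V, Quiver.Path p w → K) → Quiver.Path u w → K
  | u, _, b, Quiver.Path.nil => a u u Quiver.Path.nil * b u Quiver.Path.nil
  | u, w, b, Quiver.Path.cons δ e =>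
      a u w (δ.cons e) * b w Quiver.Path.nil +
        conv a (fun p ν => b p (ν.cons e)) δ

/-- The convolution product on `P_K((E))`. -/
def pmul {V K : Type} [Quiver.{1} V] [Semiring K] (a b : SeriesCoef V K) : SeriesCoef V K :=
  fun _ w γ => conv a (fun p ν => b p w ν) γ

/-- The power series consisting of the single edge `e` with coefficient `1`. -/
noncomputable def edgeSeries {V K : Type} [Quiver.{1} V] [Semiring K] {x y : V} (e : x ⟶ y) :
    SeriesCoef V K := fun u w γ =>
  letI := Classical.propDecidable
    ((⟨u, w, γ⟩ : (u : V) × (w : V) × Quiver.Path u w) = ⟨x, y, Quiver.Path.nil.cons e⟩)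
  if (⟨u, w, γ⟩ : (u : V) × (w : V) × Quiver.Path u w) = ⟨x, y, Quiver.Path.nil.cons e⟩
    then 1 else 0

/-- All vertices visited by a path lie in the set `S`. -/
def pathIn {V : Type} [Quiver.{1} V] (S : Set V) : ∀ {u w : V}, Quiver.Path u w → Prop
  | u, _, Quiver.Path.nil => u ∈ S
  | _, w, Quiver.Path.cons δ _ => pathIn S δ ∧ w ∈ S

section Paths

variable {V : Type} [Quiver.{1} V]

def IsExitPath (H : Set V) : ∀ {u w : V}, Quiver.Path u w → Prop
  | _, _, .nil => False
  | _, w, .cons ρ _ => pathIn Hᶜ ρ ∧ w ∈ H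

theorem pathIn_of_pathIn_comp (S : Set V) {u v : V} (ρ : Quiver.Path u v) :
    ∀ {w : V} (σ : Quiver.Path v w), pathIn S (ρ.comp σ) → pathIn S ρ
  | _, .nil, h => h
  | _, .cons σ _, h => by
    rw [Quiver.Path.comp_cons, pathIn] at h
    exact pathIn_of_pathIn_comp S ρ σ h.1

theorem IsExitPath.not_pathIn {H : Set V} {u w : V} {π : Quiver.Path u w}
    (hπ : IsExitPath H π) : ¬ pathIn Hᶜ π := by
  cases π with
  | nil => exact hπ.elim
  | cons ρ f => rw [pathIn]; exact fun h => h.2 hπ.2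

end Paths

section Convolution

variable {V K : Type} [Quiver.{1} V] [Semiring K]

theorem conv_eq_zero_of_forall_eq_zero (a : SeriesCoef V K) {u w : V} (γ : Quiver.Path u w)
    {b : ∀ p : V, Quiver.Path p w → K} (hb : ∀ p ν, b p ν = 0) : conv a b γ = 0 := by
  induction γ with
  | nil => rw [conv, hb, mul_zero]
  | cons δ f ih => rw [conv, hb, ih fun p ν => hb p _, mul_zero, add_zero]

theorem conv_eq_of_forall_cons_eq_zero (a : SeriesCoef V K) {u w : V} (γ : Quiver.Path u w)
    {b : ∀ p : V, Quiver.Path p w → K}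
    (hb : ∀ (p z : V) (ρ : Quiver.Path p z) (f : z ⟶ w), b p (ρ.cons f) = 0) :
    conv a b γ = a u w γ * b w .nil := by
  cases γ with
  | nil => rw [conv]
  | cons δ f => rw [conv, conv_eq_zero_of_forall_eq_zero a δ fun p ν => hb p _ ν f, add_zero]

theorem conv_eq_zero_of_pathIn {H : Set V} {c : SeriesCoef V K}
    (hc : ∀ u w (μ : Quiver.Path u w), c u w μ ≠ 0 → IsExitPath H μ)
    {u w : V} (ρ : Quiver.Path u w) (hρ : pathIn Hᶜ ρ) (b : ∀ p : V, Quiver.Path p w → K) :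
    conv c b ρ = 0 := by
  have hc0 {u w : V} (ρ : Quiver.Path u w) (hρ : pathIn Hᶜ ρ) : c u w ρ = 0 :=
    not_not.mp fun h => (hc _ _ ρ h).not_pathIn hρ
  induction ρ with
  | nil => rw [conv, hc0 _ hρ, zero_mul]
  | cons δ f ih =>
    rw [conv, hc0 _ hρ, zero_mul, zero_add]
    rw [pathIn] at hρ
    exact ih hρ.1 _

/- Proper prefixes of `π` lie in `Hᶜ`, and longer prefixes of `π.comp ν` meet `H` before their
last edge, so `π` is the only exit path among the prefixes. -/
theorem conv_comp_of_isExitPath {H : Set V} {c : SeriesCoef V K}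
    (hc : ∀ u w (μ : Quiver.Path u w), c u w μ ≠ 0 → IsExitPath H μ)
    {u y : V} {π : Quiver.Path u y} (hπ : IsExitPath H π) {w : V} (ν : Quiver.Path y w)
    (b : ∀ p : V, Quiver.Path p w → K) : conv c b (π.comp ν) = c u y π * b y ν := by
  induction ν with
  | nil =>
    cases π with
    | nil => exact hπ.elim
    | cons ρ f => rw [Quiver.Path.comp_nil, conv, conv_eq_zero_of_pathIn hc ρ hπ.1, add_zero]
  | cons ν' g ih =>
    have hcπν : c u _ ((π.comp ν').cons g) = 0 := not_not.mp fun h =>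
      hπ.not_pathIn (pathIn_of_pathIn_comp _ π ν' (hc _ _ _ h).1)
    rw [Quiver.Path.comp_cons, conv, hcπν, zero_mul, zero_add, ih]

theorem pmul_apply_comp_of_isExitPath {H : Set V} {c : SeriesCoef V K}
    (hc : ∀ u w (μ : Quiver.Path u w), c u w μ ≠ 0 → IsExitPath H μ)
    {u y : V} {π : Quiver.Path u y} (hπ : IsExitPath H π) {w : V} (ν : Quiver.Path y w)
    (d : SeriesCoef V K) : pmul c d u w (π.comp ν) = c u y π * d y w ν :=
  conv_comp_of_isExitPath hc hπ ν _

end Convolution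

section EdgeSeries

variable {V K : Type} [Quiver.{1} V] [Semiring K] {x y : V} (e : x ⟶ y)

theorem edgeSeries_apply_of_length_ne_one {u w : V} (γ : Quiver.Path u w) (hγ : γ.length ≠ 1) :
    edgeSeries (K := K) e u w γ = 0 :=
  if_neg fun h => hγ (congrArg (fun s => s.2.2.length) h)

theorem eq_of_edgeSeries_apply_ne_zero {u w : V} (γ : Quiver.Path u w)
    (hγ : edgeSeries (K := K) e u w γ ≠ 0) : w = y :=
  congrArg (fun s => s.2.1) (not_not.mp fun h => hγ (if_neg h))

theorem pmul_edgeSeries_apply_nil (a : SeriesCoef V K) (u : V) :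
    pmul a (edgeSeries e) u u .nil = 0 := by
  rw [pmul, conv, edgeSeries_apply_of_length_ne_one e _ (by simp), mul_zero]

theorem pmul_edgeSeries_apply_cons (a : SeriesCoef V K) {u z w : V} (δ : Quiver.Path u z)
    (f : z ⟶ w) :
    pmul a (edgeSeries e) u w (δ.cons f) = a u z δ * edgeSeries e z w (Quiver.Path.nil.cons f) := by
  rw [pmul, conv, edgeSeries_apply_of_length_ne_one e _ (by simp), mul_zero, zero_add,
    conv_eq_of_forall_cons_eq_zero (b := fun p ν => edgeSeries e p w (ν.cons f)) a δ
      fun _ _ _ _ => edgeSeries_apply_of_length_ne_one e _ (by simp)]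

theorem exists_cons_of_pmul_edgeSeries_ne_zero (a : SeriesCoef V K) {u w : V} (μ : Quiver.Path u w)
    (hμ : pmul a (edgeSeries e) u w μ ≠ 0) :
    ∃ (z : V) (δ : Quiver.Path u z) (f : z ⟶ w), μ = δ.cons f ∧ a u z δ ≠ 0 ∧ w = y := by
  cases μ with
  | nil => exact absurd (pmul_edgeSeries_apply_nil e a u) hμ
  | cons δ f =>
    rw [pmul_edgeSeries_apply_cons] at hμ
    exact ⟨_, δ, f, rfl, left_ne_zero_of_mul hμ,
      eq_of_edgeSeries_apply_ne_zero e _ (right_ne_zero_of_mul hμ)⟩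

theorem isExitPath_of_pmul_edgeSeries_ne_zero {H : Set V} {a : SeriesCoef V K}
    (ha : ∀ u w (γ : Quiver.Path u w), a u w γ ≠ 0 → pathIn Hᶜ γ) (hy : y ∈ H) {u w : V}
    (μ : Quiver.Path u w) (hμ : pmul a (edgeSeries e) u w μ ≠ 0) : IsExitPath H μ := by
  obtain ⟨z, δ, f, rfl, hδ, rfl⟩ := exists_cons_of_pmul_edgeSeries_ne_zero e a μ hμ
  exact ⟨ha _ _ δ hδ, hy⟩

end EdgeSeries

/-- let `H` be hereditary, `e : x ⟶ y` a crossing edge (`x ∉ H`, `y ∈ H`),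
`b i` power series supported on paths starting at `y` which are `K`-linearly independent,
and `a i` power series supported on paths entirely inside `E⁰ \ H`. If some `aᵢ e ≠ 0`,
then `∑ᵢ aᵢ e bᵢ ≠ 0` in `P_K((E))`. -/
theorem stmt12 {V K : Type} [Quiver.{1} V] [Fintype V] [∀ u w : V, Fintype (u ⟶ w)] [Field K]
    (H : Set V) (hH : ∀ (u w : V) (f : u ⟶ w), u ∈ H → w ∈ H)
    {x y : V} (e : x ⟶ y) (hx : x ∉ H) (hy : y ∈ H)
    {m : ℕ} (b : Fin m → SeriesCoef V K)
    (hbsupp : ∀ (i : Fin m) (u w : V) (γ : Quiver.Path u w), b i u w γ ≠ 0 → u = y)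
    (hbind : LinearIndependent K b)
    (a : Fin m → SeriesCoef V K)
    (hasupp : ∀ (i : Fin m) (u w : V) (γ : Quiver.Path u w), a i u w γ ≠ 0 → pathIn Hᶜ γ)
    (hne : ∃ i : Fin m, pmul (a i) (edgeSeries e) ≠ 0) :
    ∑ i : Fin m, pmul (pmul (a i) (edgeSeries e)) (b i) ≠ 0 := by
  intro hzero
  obtain ⟨i₀, hi₀⟩ := hne
  obtain ⟨u, v, μ, hμ⟩ : ∃ u v μ, pmul (a i₀) (edgeSeries e) u v μ ≠ 0 := by
    by_contra! h
    exact hi₀ (funext fun u => funext fun v => funext (h u v))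
  obtain ⟨-, -, -, -, -, hv⟩ := exists_cons_of_pmul_edgeSeries_ne_zero e _ μ hμ
  subst v
  have hexit : ∀ i u w (ρ : Quiver.Path u w), pmul (a i) (edgeSeries e) u w ρ ≠ 0 →
      IsExitPath H ρ := fun i _ _ => isExitPath_of_pmul_edgeSeries_ne_zero e (hasupp i) hy
  have hcomb : ∑ i, pmul (a i) (edgeSeries e) u y μ • b i = 0 := by
    funext p w ν
    simp only [Finset.sum_apply, Pi.smul_apply, smul_eq_mul, Pi.zero_apply]
    by_cases hp : p = y
    · subst p
      have hcoef := congrFun (congrFun (congrFun hzero u) w) (μ.comp ν)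
      simp only [Finset.sum_apply, Pi.zero_apply] at hcoef
      rw [← hcoef]
      exact Finset.sum_congr rfl fun i _ =>
        (pmul_apply_comp_of_isExitPath (hexit i) (hexit i₀ u y μ hμ) ν (b i)).symm
    · exact Finset.sum_eq_zero fun i _ => by
        rw [not_not.mp (mt (hbsupp i p w ν) hp), mul_zero]
  exact hμ (Fintype.linearIndependent_iff.mp hbind _ hcomb i₀)
end
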